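/- Pointwise limit relating Jacobi–Piñeiro and Laguerre type I polynomials: with P^{(i)}_{n⃗}(·; α₁,…,α_p, β) and L^{(i)}_{n⃗}(·; α₁,…,α_p) the polynomials defined by the hypergeometric expressions of the paper, for every x ∈ ℝ, lim_{β→∞} \frac{Γ(β+|n⃗|)}{\prod_{k=1}^p (α_k+β+|n⃗|)_{n_k} Γ(α_i+β+|n⃗|)} P^{(i)}_{n⃗}(x/β; α₁,…,α_p, β) = L^{(i)}_{n⃗}(x; α₁,…,α_p). -/

import Mathlib

/-- Pochhammer symbol `(x)ₙ` on `ℝ`. -/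
noncomputable def poch (x : ℝ) (n : ℕ) : ℝ := ∏ s ∈ Finset.range n, (x + s)

/-- The `i`-th type I Jacobi–Piñeiro polynomial for `p` weights. -/
noncomputable def JP (p : ℕ) (α : Fin p → ℝ) (β : ℝ) (n : Fin p → ℕ) (i : Fin p)
    (x : ℝ) : ℝ :=
  (-1) ^ ((∑ k, n k) - 1) *
    ((∏ k, poch (α k + β + (∑ k, n k : ℕ)) (n k)) /
      (((n i - 1).factorial : ℝ) *
        ∏ k ∈ Finset.univ.erase i, poch (α k - α i) (n k))) *
    (Real.Gamma (α i + β + (∑ k, n k : ℕ)) /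
      (Real.Gamma (β + (∑ k, n k : ℕ)) * Real.Gamma (α i + 1))) *
    ∑ l ∈ Finset.range (n i),
      poch (-(n i : ℝ) + 1) l * poch (α i + β + (∑ k, n k : ℕ)) l *
          (∏ k ∈ Finset.univ.erase i, poch (α i + 1 - α k - n k) l) /
          (poch (α i + 1) l *
            (∏ k ∈ Finset.univ.erase i, poch (α i + 1 - α k) l) * (l.factorial : ℝ)) *
        x ^ l

/-- The `i`-th type I Laguerre polynomial of the first kind for `p` weights. -/
noncomputable def Lag (p : ℕ) (α : Fin p → ℝ) (n : Fin p → ℕ) (i : Fin p) (x : ℝ) : ℝ :=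
  (-1) ^ ((∑ k, n k) - 1) *
    (1 / (((n i - 1).factorial : ℝ) *
      (∏ k ∈ Finset.univ.erase i, poch (α k - α i) (n k)) * Real.Gamma (α i + 1))) *
    ∑ l ∈ Finset.range (n i),
      poch (-(n i : ℝ) + 1) l *
          (∏ k ∈ Finset.univ.erase i, poch (α i + 1 - α k - n k) l) /
          (poch (α i + 1) l *
            (∏ k ∈ Finset.univ.erase i, poch (α i + 1 - α k) l) * (l.factorial : ℝ)) *
        x ^ l

/-! The normalising factor `Γ(β+|n|) / (∏ₖ (αₖ+β+|n|)_{nₖ} Γ(αᵢ+β+|n|))` cancels the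
`β`-dependent prefactor of `JP` exactly, so the normalised `JP` at `x / β` is the Laguerre
series whose `l`-th term carries the extra factor `(αᵢ+β+|n|)ₗ / βˡ = ∏_{s<l} (αᵢ+β+|n|+s) / β`,
and each of these finitely many factors tends to `1` as `β → ∞`. -/

open Filter Topology

lemma poch_pos {x : ℝ} (hx : 0 < x) (n : ℕ) : 0 < poch x n :=
  Finset.prod_pos fun _ _ => by positivity

lemma tendsto_poch_add_mul_div_pow (a x : ℝ) (l : ℕ) :
    Tendsto (fun β : ℝ => poch (β + a) l * (x / β) ^ l) atTop (𝓝 (x ^ l)) := by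
  have hfactor (s : ℕ) : Tendsto (fun β : ℝ => (β + a + s) * (x / β)) atTop (𝓝 x) := by
    have h : Tendsto (fun β : ℝ => x + (a + s) * x * β⁻¹) atTop (𝓝 x) := by
      simpa using (tendsto_inv_atTop_zero.const_mul ((a + s) * x)).const_add x
    refine h.congr' ?_
    filter_upwards [eventually_ne_atTop 0] with β hβ
    field_simp
    ring
  simpa only [poch, Finset.prod_mul_distrib, Finset.prod_const, Finset.card_range] using
    tendsto_finsetProd (Finset.range l) fun s _ => hfactor s

section Laguerre

variable {p : ℕ} (α : Fin p → ℝ) (n : Fin p → ℕ) (i : Fin p)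

noncomputable def lagCoeff (l : ℕ) : ℝ :=
  poch (-(n i : ℝ) + 1) l * (∏ k ∈ Finset.univ.erase i, poch (α i + 1 - α k - n k) l) /
    (poch (α i + 1) l * (∏ k ∈ Finset.univ.erase i, poch (α i + 1 - α k) l) * (l.factorial : ℝ))

noncomputable def lagPrefactor : ℝ :=
  (-1) ^ ((∑ k, n k) - 1) *
    (1 / (((n i - 1).factorial : ℝ) *
      (∏ k ∈ Finset.univ.erase i, poch (α k - α i) (n k)) * Real.Gamma (α i + 1)))

lemma Lag_eq_lagPrefactor_mul_sum (x : ℝ) :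
    Lag p α n i x = lagPrefactor α n i * ∑ l ∈ Finset.range (n i), lagCoeff α n i l * x ^ l :=
  rfl

lemma JP_eq_lagPrefactor_mul_sum (β x : ℝ) :
    JP p α β n i x =
      (∏ k, poch (α k + β + (∑ k, n k : ℕ)) (n k)) * Real.Gamma (α i + β + (∑ k, n k : ℕ)) /
          Real.Gamma (β + (∑ k, n k : ℕ)) *
        (lagPrefactor α n i * ∑ l ∈ Finset.range (n i),
          lagCoeff α n i l * (poch (α i + β + (∑ k, n k : ℕ)) l * x ^ l)) := by
  simp only [JP, lagPrefactor, lagCoeff, Finset.mul_sum]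
  refine Finset.sum_congr rfl fun l _ => ?_
  ring

end Laguerre

theorem laguerre_limit_of_jacobiPineiro_general (p : ℕ) (α : Fin p → ℝ)
    (n : Fin p → ℕ) (i : Fin p) (x : ℝ) :
    Filter.Tendsto
      (fun β : ℝ =>
        Real.Gamma (β + (∑ k, n k : ℕ)) /
            ((∏ k, poch (α k + β + (∑ k, n k : ℕ)) (n k)) *
              Real.Gamma (α i + β + (∑ k, n k : ℕ))) *
          JP p α β n i (x / β))
      Filter.atTop (nhds (Lag p α n i x)) := by
  have hN : 0 ≤ ((∑ k, n k : ℕ) : ℝ) := Nat.cast_nonneg _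
  simp only [JP_eq_lagPrefactor_mul_sum]
  generalize ((∑ k, n k : ℕ) : ℝ) = N at hN ⊢
  have hsum : Tendsto (fun β : ℝ => lagPrefactor α n i * ∑ l ∈ Finset.range (n i),
      lagCoeff α n i l * (poch (α i + β + N) l * (x / β) ^ l)) atTop (𝓝 (Lag p α n i x)) := by
    refine (tendsto_finsetSum _ fun l _ => (?_ : Tendsto _ _ _).const_mul _).const_mul _
    simpa only [add_right_comm _ _ N, add_comm _ (_ + N)] using
      tendsto_poch_add_mul_div_pow (α i + N) x l
  refine hsum.congr' ?_
  filter_upwards [eventually_gt_atTop 0,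
    eventually_all.2 fun k => eventually_gt_atTop (-α k - N)] with β hβ hαβ
  have hΓ : Real.Gamma (β + N) ≠ 0 := (Real.Gamma_pos_of_pos (by linarith)).ne'
  have hΓi : Real.Gamma (α i + β + N) ≠ 0 :=
    (Real.Gamma_pos_of_pos (by linarith [hαβ i])).ne'
  have hpoch : ∏ k, poch (α k + β + N) (n k) ≠ 0 :=
    (Finset.prod_pos fun k _ => poch_pos (by linarith [hαβ k]) _).ne'
  field_simp

/-- Pointwise limit relating the type I Jacobi–Piñeiro polynomials to the type I
Laguerre polynomials of the first kind, as `β → ∞`. -/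
theorem laguerre_limit_of_jacobiPineiro (p : ℕ) (α : Fin p → ℝ) (hα : ∀ k, -1 < α k)
    (hZ : ∀ k k', k ≠ k' → ∀ z : ℤ, α k - α k' ≠ (z : ℝ))
    (n : Fin p → ℕ) (hn : ∀ k, 1 ≤ n k) (i : Fin p) (x : ℝ) :
    Filter.Tendsto
      (fun β : ℝ =>
        Real.Gamma (β + (∑ k, n k : ℕ)) /
            ((∏ k, poch (α k + β + (∑ k, n k : ℕ)) (n k)) *
              Real.Gamma (α i + β + (∑ k, n k : ℕ))) *
          JP p α β n i (x / β))
      Filter.atTop (nhds (Lag p α n i x)) :=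
  laguerre_limit_of_jacobiPineiro_general p α n i x
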